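/- arXiv:2412.09987 — 2 statements merged into one kernel-verified Lean document; each statement's English description precedes it below -/
import Mathlib

section
/- For every smooth compactly supported function u on ℝ^n, the L^1 norm of u is bounded by the integral of |x| times |∂u/∂x₁|, i.e. ∫_{ℝ^n} |u(x)| dx ≤ ∫_{ℝ^n} |x| |∂₁u(x)| dx. -/
open MeasureTheory

/-- Partial derivative in the `i`-th coordinate direction on `ℝⁿ`. -/
noncomputable def pd {n : ℕ} (i : Fin n) (f : EuclideanSpace ℝ (Fin n) → ℝ)
    (x : EuclideanSpace ℝ (Fin n)) : ℝ :=
  fderiv ℝ f x (EuclideanSpace.single i 1)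

open Set
open scoped ENNReal NNReal

lemma ennnorm_le_lintegral_Ici {g : ℝ → ℝ} (hg : ContDiff ℝ 1 g) (h2g : HasCompactSupport g)
    (t : ℝ) : (‖g t‖₊ : ℝ≥0∞) ≤ ∫⁻ s in Ici t, ‖deriv g s‖₊ := by
  have hh : ContDiff ℝ 1 (fun s => g (-s)) := hg.comp (contDiff_neg)
  have h2h : HasCompactSupport (fun s => g (-s)) := h2g.comp_homeomorph (Homeomorph.neg ℝ)
  have h1 : (‖g t‖₊ : ℝ≥0∞) ≤ ∫⁻ s in Iic (-t), ‖deriv (fun s => g (-s)) s‖₊ := by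
    have := HasCompactSupport.enorm_le_lintegral_Ici_deriv hh h2h (-t)
    simp only [neg_neg] at this; exact this
  refine h1.trans (le_of_eq ?_)
  have hd : ∀ s : ℝ, (‖deriv (fun s => g (-s)) s‖₊ : ℝ≥0∞) = ‖deriv g (-s)‖₊ := by
    intro s; rw [deriv_comp_neg]; simp
  simp_rw [hd]
  have hmp : MeasurePreserving (fun s : ℝ => -s) volume volume :=
    Measure.measurePreserving_neg _
  have := hmp.setLIntegral_comp_emb (Homeomorph.neg ℝ).measurableEmbedding
    (fun s => (‖deriv g s‖₊ : ℝ≥0∞)) (Iic (-t))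
  rw [show (fun s : ℝ => -s) '' Iic (-t) = Ici t by ext s; simp [neg_le]] at this
  exact this

lemma swap_Ioi {h : ℝ → ℝ≥0∞} (hm : Measurable h) :
    ∫⁻ t in Ioi (0:ℝ), ∫⁻ s in Ici t, h s = ∫⁻ s, h s * ENNReal.ofReal s := by
  have hunc : Measurable (Function.uncurry fun (t s : ℝ) => (Ici t).indicator h s) := by
    have : (Function.uncurry fun (t s : ℝ) => (Ici t).indicator h s)
        = {p : ℝ × ℝ | p.1 ≤ p.2}.indicator (fun p => h p.2) := by
      ext p
      by_cases hp : p.1 ≤ p.2 <;>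
        simp [Function.uncurry, Set.indicator, hp]
    rw [this]
    exact (hm.comp measurable_snd).indicator (measurableSet_le measurable_fst measurable_snd)
  calc ∫⁻ t in Ioi (0:ℝ), ∫⁻ s in Ici t, h s
      = ∫⁻ t in Ioi (0:ℝ), ∫⁻ s, (Ici t).indicator h s := by
        refine lintegral_congr fun t => ?_
        rw [lintegral_indicator measurableSet_Ici]
    _ = ∫⁻ s, ∫⁻ t in Ioi (0:ℝ), (Ici t).indicator h s := by
        exact lintegral_lintegral_swap hunc.aemeasurable
    _ = ∫⁻ s, h s * ENNReal.ofReal s := by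
        refine lintegral_congr fun s => ?_
        have e : ∀ t : ℝ, (Ici t).indicator h s = (Iic s).indicator (fun _ => h s) t := by
          intro t; by_cases ht : t ≤ s <;> simp [Set.indicator, ht]
        simp_rw [e]
        rw [lintegral_indicator measurableSet_Iic, setLIntegral_const,
          Measure.restrict_apply measurableSet_Iic, Set.Iic_inter_Ioi]
        simp [Real.volume_Ioc]

lemma swap_Iic {h : ℝ → ℝ≥0∞} (hm : Measurable h) :
    ∫⁻ t in Iic (0:ℝ), ∫⁻ s in Iic t, h s = ∫⁻ s, h s * ENNReal.ofReal (-s) := by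
  have hunc : Measurable (Function.uncurry fun (t s : ℝ) => (Iic t).indicator h s) := by
    have : (Function.uncurry fun (t s : ℝ) => (Iic t).indicator h s)
        = {p : ℝ × ℝ | p.2 ≤ p.1}.indicator (fun p => h p.2) := by
      ext p
      by_cases hp : p.2 ≤ p.1 <;>
        simp [Function.uncurry, Set.indicator, hp]
    rw [this]
    exact (hm.comp measurable_snd).indicator (measurableSet_le measurable_snd measurable_fst)
  calc ∫⁻ t in Iic (0:ℝ), ∫⁻ s in Iic t, h s
      = ∫⁻ t in Iic (0:ℝ), ∫⁻ s, (Iic t).indicator h s := by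
        refine lintegral_congr fun t => ?_
        rw [lintegral_indicator measurableSet_Iic]
    _ = ∫⁻ s, ∫⁻ t in Iic (0:ℝ), (Iic t).indicator h s := by
        exact lintegral_lintegral_swap hunc.aemeasurable
    _ = ∫⁻ s, h s * ENNReal.ofReal (-s) := by
        refine lintegral_congr fun s => ?_
        have e : ∀ t : ℝ, (Iic t).indicator h s = (Ici s).indicator (fun _ => h s) t := by
          intro t; by_cases ht : s ≤ t <;> simp [Set.indicator, ht]
        simp_rw [e]
        rw [lintegral_indicator measurableSet_Ici, setLIntegral_const,
          Measure.restrict_apply measurableSet_Ici]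
        rw [show Ici s ∩ Iic (0:ℝ) = Icc s 0 from rfl]
        simp [Real.volume_Icc]

lemma oneD {g : ℝ → ℝ} (hg : ContDiff ℝ 1 g) (h2g : HasCompactSupport g) :
    ∫⁻ t, (‖g t‖₊ : ℝ≥0∞) ≤ ∫⁻ t, (‖t‖₊ : ℝ≥0∞) * ‖deriv g t‖₊ := by
  have hm : Measurable fun s => (‖deriv g s‖₊ : ℝ≥0∞) :=
    ((hg.continuous_deriv le_rfl).measurable.nnnorm).coe_nnreal_ennreal
  calc ∫⁻ t, (‖g t‖₊ : ℝ≥0∞)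
      = (∫⁻ t in Iic (0:ℝ), ‖g t‖₊) + ∫⁻ t in Ioi (0:ℝ), ‖g t‖₊ := by
        rw [← lintegral_add_compl (fun t => (‖g t‖₊ : ℝ≥0∞)) measurableSet_Iic, compl_Iic]
    _ ≤ (∫⁻ t in Iic (0:ℝ), ∫⁻ s in Iic t, ‖deriv g s‖₊)
        + ∫⁻ t in Ioi (0:ℝ), ∫⁻ s in Ici t, ‖deriv g s‖₊ := by
        exact add_le_add
          (lintegral_mono fun t => HasCompactSupport.enorm_le_lintegral_Ici_deriv hg h2g t)
          (lintegral_mono fun t => ennnorm_le_lintegral_Ici hg h2g t)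
    _ = (∫⁻ s, ‖deriv g s‖₊ * ENNReal.ofReal (-s)) + ∫⁻ s, ‖deriv g s‖₊ * ENNReal.ofReal s := by
        rw [swap_Iic hm, swap_Ioi hm]
    _ = ∫⁻ s, (‖deriv g s‖₊ * ENNReal.ofReal (-s) + ‖deriv g s‖₊ * ENNReal.ofReal s) := by
        exact (lintegral_add_left (hm.mul measurable_neg.ennreal_ofReal) _).symm
    _ = ∫⁻ s, (‖s‖₊ : ℝ≥0∞) * ‖deriv g s‖₊ := by
        refine lintegral_congr fun s => ?_
        rw [← mul_add, mul_comm]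
        congr 1
        rw [← enorm_eq_nnnorm, Real.enorm_eq_ofReal_abs]
        rcases le_total s 0 with h | h
        · rw [abs_of_nonpos h, ENNReal.ofReal_eq_zero.mpr h, add_zero]
        · rw [abs_of_nonneg h, ENNReal.ofReal_eq_zero.mpr (neg_nonpos.mpr h), zero_add]


lemma coord_le_norm {n : ℕ} (x : EuclideanSpace ℝ (Fin n)) (i : Fin n) : |x i| ≤ ‖x‖ := by
  rw [EuclideanSpace.norm_eq, ← Real.sqrt_sq_eq_abs]
  apply Real.sqrt_le_sqrt
  calc (x i) ^ 2 = ‖x i‖ ^ 2 := by rw [Real.norm_eq_abs, sq_abs]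
    _ ≤ ∑ j, ‖x j‖ ^ 2 :=
      Finset.single_le_sum (f := fun j => ‖x j‖ ^ 2) (fun j _ => sq_nonneg _) (Finset.mem_univ i)

section Main
variable {n : ℕ} (hn : 0 < n) (u : EuclideanSpace ℝ (Fin n) → ℝ)

lemma key_lintegral (hu : ContDiff ℝ (⊤ : ℕ∞) u) (hc : HasCompactSupport u) (i0 : Fin n) :
    ∫⁻ x : EuclideanSpace ℝ (Fin n), ‖u x‖₊ ≤
      ∫⁻ x : EuclideanSpace ℝ (Fin n), (‖x‖₊ : ℝ≥0∞) * ‖pd i0 u x‖₊ := by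
  classical
  set φ := (MeasurableEquiv.toLp 2 (Fin n → ℝ)).symm with hφdef
  have hφ : MeasurePreserving φ := EuclideanSpace.volume_preserving_symm_measurableEquiv_toLp (Fin n)
  have hφs : MeasurePreserving φ.symm volume volume := MeasurePreserving.symm φ hφ
  have hpd_cont : Continuous (pd i0 u) :=
    (hu.continuous_fderiv (by simp)).clm_apply continuous_const
  set F : (Fin n → ℝ) → ℝ≥0∞ := fun y => ‖u (φ.symm y)‖₊ with hFdef
  set G : (Fin n → ℝ) → ℝ≥0∞ :=
    fun y => (‖φ.symm y‖₊ : ℝ≥0∞) * ‖pd i0 u (φ.symm y)‖₊ with hGdef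
  have hFmeas : Measurable F :=
    (hu.continuous.measurable.comp φ.symm.measurable).nnnorm.coe_nnreal_ennreal
  have hGmeas : Measurable G :=
    ((measurable_nnnorm.comp φ.symm.measurable).coe_nnreal_ennreal).mul
      ((hpd_cont.measurable.comp φ.symm.measurable).nnnorm.coe_nnreal_ennreal)
  -- pointwise inequality in the `i0` coordinate
  have key : ∀ y : Fin n → ℝ,
      ∫⁻ t, F (Function.update y i0 t) ≤ ∫⁻ t, G (Function.update y i0 t) := by
    intro y
    set L : ℝ → EuclideanSpace ℝ (Fin n) := fun t => φ.symm (Function.update y i0 t) with hLdef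
    have hLaff : L = fun t => φ.symm (Function.update y i0 0) + t • EuclideanSpace.single i0 1 := by
      funext t
      ext j
      by_cases hj : j = i0
      · subst hj
        simp [L, hφdef, MeasurableEquiv.coe_toLp,
          Function.update_self, EuclideanSpace.single_apply]
      · simp [L, hφdef, MeasurableEquiv.coe_toLp,
          Function.update_of_ne hj, EuclideanSpace.single_apply, hj]
    have hLcoord : ∀ t, (L t) i0 = t := by
      intro t
      simp [L, hφdef, MeasurableEquiv.coe_toLp,
        Function.update_self]
    have habs : ∀ t : ℝ, |t| ≤ ‖L t‖ := by
      intro t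
      conv_lhs => rw [← hLcoord t]
      exact coord_le_norm (L t) i0
    have hL : ∀ t, HasDerivAt L (EuclideanSpace.single i0 1) t := by
      intro t
      rw [hLaff]
      simpa using ((hasDerivAt_id t).smul_const (EuclideanSpace.single i0 (1:ℝ))).const_add
        (φ.symm (Function.update y i0 0))
    set g : ℝ → ℝ := fun t => u (L t) with hgdef
    have hg1 : ContDiff ℝ 1 g := by
      rw [hgdef, hLaff]
      exact (hu.of_le (by simp)).comp
        (contDiff_const.add (contDiff_id.smul contDiff_const))
    have hg2 : HasCompactSupport g := by
      obtain ⟨R, hR⟩ := hc.isBounded.exists_norm_le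
      apply HasCompactSupport.intro (isCompact_Icc (a := -R) (b := R))
      intro t ht
      by_contra hgt
      have hLt : L t ∈ tsupport u := subset_tsupport u (by simpa [hgdef] using hgt)
      have h1 : |t| ≤ R := (habs t).trans (hR _ hLt)
      exact ht (Set.mem_Icc.mpr (abs_le.mp h1))
    have hderiv : ∀ t, deriv g t = pd i0 u (L t) := by
      intro t
      exact (((hu.differentiable (by simp)) (L t)).hasFDerivAt.comp_hasDerivAt t (hL t)).deriv
    calc ∫⁻ t, F (Function.update y i0 t) = ∫⁻ t, (‖g t‖₊ : ℝ≥0∞) := rfl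
      _ ≤ ∫⁻ t, (‖t‖₊ : ℝ≥0∞) * ‖deriv g t‖₊ := oneD hg1 hg2
      _ ≤ ∫⁻ t, G (Function.update y i0 t) := by
          refine lintegral_mono fun t => ?_
          rw [hderiv t]
          refine mul_le_mul_left ?_ _
          rw [ENNReal.coe_le_coe]
          simpa [← NNReal.coe_le_coe, nnnorm, Real.norm_eq_abs] using habs t
  -- now the marginal argument
  have humeas : Measurable fun x : EuclideanSpace ℝ (Fin n) => (‖u x‖₊ : ℝ≥0∞) :=
    hu.continuous.measurable.nnnorm.coe_nnreal_ennreal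
  have hwmeas : Measurable fun x : EuclideanSpace ℝ (Fin n) =>
      (‖x‖₊ : ℝ≥0∞) * ‖pd i0 u x‖₊ :=
    measurable_nnnorm.coe_nnreal_ennreal.mul
      (hpd_cont.measurable.nnnorm.coe_nnreal_ennreal)
  calc ∫⁻ x : EuclideanSpace ℝ (Fin n), (‖u x‖₊ : ℝ≥0∞)
      = ∫⁻ y, F y ∂(Measure.pi fun _ => (volume : Measure ℝ)) := by
        rw [← volume_pi]
        exact (hφs.lintegral_comp humeas).symm
    _ ≤ ∫⁻ y, G y ∂(Measure.pi fun _ => (volume : Measure ℝ)) := by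
        rw [lintegral_eq_lmarginal_univ (0 : Fin n → ℝ),
          lintegral_eq_lmarginal_univ (0 : Fin n → ℝ),
          lmarginal_erase' F hFmeas (Finset.mem_univ i0),
          lmarginal_erase' G hGmeas (Finset.mem_univ i0)]
        exact lmarginal_mono (fun y => key y) _
    _ = ∫⁻ x : EuclideanSpace ℝ (Fin n), (‖x‖₊ : ℝ≥0∞) * ‖pd i0 u x‖₊ := by
        rw [← volume_pi]
        exact hφs.lintegral_comp hwmeas

end Main

theorem stmt_0 (n : ℕ) (hn : 0 < n) (u : EuclideanSpace ℝ (Fin n) → ℝ)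
    (hu : ContDiff ℝ (⊤ : ℕ∞) u) (hc : HasCompactSupport u) :
    ∫ x : EuclideanSpace ℝ (Fin n), |u x| ≤
      ∫ x : EuclideanSpace ℝ (Fin n), ‖x‖ * |pd ⟨0, hn⟩ u x| := by
  set i0 : Fin n := ⟨0, hn⟩ with hi0
  have hpd_cont : Continuous (pd i0 u) :=
    (hu.continuous_fderiv (by simp)).clm_apply continuous_const
  set w : EuclideanSpace ℝ (Fin n) → ℝ := fun x => ‖x‖ * pd i0 u x with hw
  have hw_cont : Continuous w := continuous_norm.mul hpd_cont
  have hpd_supp : HasCompactSupport (pd i0 u) :=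
    (hc.fderiv ℝ).comp_left
      (g := fun A : EuclideanSpace ℝ (Fin n) →L[ℝ] ℝ => A (EuclideanSpace.single i0 1)) rfl
  have hw_supp : HasCompactSupport w := hpd_supp.mul_left
  have hw_int : Integrable w := hw_cont.integrable_of_hasCompactSupport hw_supp
  have h1 : ∫ x : EuclideanSpace ℝ (Fin n), |u x|
      = (∫⁻ x : EuclideanSpace ℝ (Fin n), ‖u x‖₊).toReal := by
    simp_rw [← Real.norm_eq_abs]
    exact integral_norm_eq_lintegral_enorm hu.continuous.aestronglyMeasurable
  have h2 : ∫ x : EuclideanSpace ℝ (Fin n), ‖x‖ * |pd i0 u x|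
      = (∫⁻ x : EuclideanSpace ℝ (Fin n), ‖w x‖₊).toReal := by
    have e : ∀ x : EuclideanSpace ℝ (Fin n), ‖x‖ * |pd i0 u x| = ‖w x‖ := by
      intro x
      rw [hw, Real.norm_eq_abs, abs_mul, abs_of_nonneg (norm_nonneg _)]
    simp_rw [e]
    exact integral_norm_eq_lintegral_enorm hw_cont.aestronglyMeasurable
  rw [h1, h2]
  apply ENNReal.toReal_mono
  · exact hw_int.2.ne
  · calc ∫⁻ x : EuclideanSpace ℝ (Fin n), (‖u x‖₊ : ℝ≥0∞)
        ≤ ∫⁻ x : EuclideanSpace ℝ (Fin n), (‖x‖₊ : ℝ≥0∞) * ‖pd i0 u x‖₊ :=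
          key_lintegral u hu hc i0
      _ = ∫⁻ x : EuclideanSpace ℝ (Fin n), (‖w x‖₊ : ℝ≥0∞) := by
          refine lintegral_congr fun x => ?_
          rw [hw]
          simp [nnnorm_mul, nnnorm_norm, ENNReal.coe_mul]
end

section
/- The symbol A(ξ)(v) = (ξ₁v₁, ξ₂v₁+ξ₁v₂, ξ₂v₂) of the symmetrized gradient on ℝ² is canceling: the intersection over all nonzero ξ ∈ ℝ² of the images of A(ξ) : ℝ² → ℝ³ is {0}. -/
/-! `Image[A(ξ)]` lies in the plane with normal `(ξ₂², -ξ₁ξ₂, ξ₁²)`. For `ξ = (0,1), (1,0), (1,1)`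
these normals are `(1,0,0), (0,0,1), (1,-1,1)`, which span `ℝ³`, so only `0` lies in all images. -/

noncomputable abbrev E2 := EuclideanSpace ℝ (Fin 2)

lemma symbol_normal_eq_zero {w : Fin 3 → ℝ} {a b x y : ℝ}
    (hw : w = ![a * x, b * x + a * y, b * y]) :
    b ^ 2 * w 0 - a * b * w 1 + a ^ 2 * w 2 = 0 := by
  subst hw
  simp only [Matrix.cons_val]
  ring

lemma toLp_vec2_ne_zero {a b : ℝ} (hab : a ≠ 0 ∨ b ≠ 0) :
    (WithLp.toLp 2 ![a, b] : E2) ≠ 0 := by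
  intro h0
  have h0' := congrArg (fun ξ : E2 => (ξ 0, ξ 1)) h0
  simp only [Matrix.cons_val_zero, Matrix.cons_val_one, Matrix.cons_val_fin_one, PiLp.zero_apply,
    Prod.mk.injEq] at h0'
  tauto

/-- The symbol `A(ξ)(v) = (ξ₁v₁, ξ₂v₁ + ξ₁v₂, ξ₂v₂)` is canceling:
`⋂_{ξ ≠ 0} Image[A(ξ)] = {0}` in `ℝ³`. -/
theorem stmt_6 (w : Fin 3 → ℝ)
    (h : ∀ ξ : E2, ξ ≠ 0 → ∃ v : E2,
      w = ![ξ 0 * v 0, ξ 1 * v 0 + ξ 0 * v 1, ξ 1 * v 1]) :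
    w = 0 := by
  have normal : ∀ a b : ℝ, a ≠ 0 ∨ b ≠ 0 → b ^ 2 * w 0 - a * b * w 1 + a ^ 2 * w 2 = 0 := by
    intro a b hab
    obtain ⟨v, hv⟩ := h _ (toLp_vec2_ne_zero hab)
    exact symbol_normal_eq_zero hv
  have h₀ := normal 0 1 (by norm_num)
  have h₂ := normal 1 0 (by norm_num)
  have h₁ := normal 1 1 (by norm_num)
  ext i
  fin_cases i <;> simp at * <;> linarith
end
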